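/- Let G be a finite simple graph, let S₁, …, S_k ⊆ V be anchor groups, let v* ∈ V, and let val* be the reduction value function. Suppose the set F of feasible subgraphs of G is nonempty, and let ρ be a real number with 0 < ρ ≤ 1. If H ∈ F satisfies Φ(H) ≥ ρ · max_{H' ∈ F} Φ(H') (with Φ computed with respect to val*), then |V(H)| + |E(H)| ≤ (1/ρ) · min_{H' ∈ F} (|V(H')| + |E(H')|); that is, a ρ-approximate solution of the constructed OISR instance yields a (1/ρ)-approximate Group Steiner tree solution. -/

import Mathlib

open scoped BigOperators

/-- The information-density objective Φ of a subgraph `H`, given a value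
function on vertices and on edges. -/
noncomputable def Phi {V : Type*} {G : SimpleGraph V} (H : G.Subgraph)
    (valV : V → ℝ) (valE : Sym2 V → ℝ) : ℝ :=
  ((∑ᶠ v ∈ H.verts, valV v) + ∑ᶠ e ∈ H.edgeSet, valE e) /
    ((H.verts.ncard + H.edgeSet.ncard : ℕ) : ℝ)

/-- The reduction value function on vertices: `1` at `vstar`, `0` elsewhere. -/
noncomputable def redVal {V : Type*} [DecidableEq V] (vstar : V) : V → ℝ :=
  fun v => if v = vstar then 1 else 0

/-! Every feasible subgraph contains `vstar`, so under `redVal vstar` its density is exactly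
`1 / (|V(H)| + |E(H)|)`. Hence the optimum density is `1 / m`, and `Φ(H) ≥ ρ / m` inverts to
`|V(H)| + |E(H)| ≤ m / ρ`. -/

section

variable {V : Type*} [DecidableEq V] {vstar : V}

theorem finsum_mem_redVal {s : Set V} (h : vstar ∈ s) : ∑ᶠ v ∈ s, redVal vstar v = 1 := by
  rw [finsum_mem_def, finsum_eq_single _ vstar fun v hv => by simp [redVal, hv]]
  simp [redVal, h]

theorem Phi_redVal_of_mem {G : SimpleGraph V} {H : G.Subgraph} (h : vstar ∈ H.verts) :
    Phi H (redVal vstar) (fun _ => 0) = 1 / ((H.verts.ncard + H.edgeSet.ncard : ℕ) : ℝ) := by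
  rw [Phi, finsum_mem_redVal h, finsum_mem_zero, add_zero]

end

theorem SimpleGraph.Subgraph.ncard_verts_add_ncard_edgeSet_pos {V : Type*} [Finite V]
    {G : SimpleGraph V} {H : G.Subgraph} {v : V} (h : v ∈ H.verts) :
    0 < H.verts.ncard + H.edgeSet.ncard :=
  Nat.add_pos_left ((Set.ncard_pos H.verts.toFinite).mpr ⟨v, h⟩) _

theorem le_one_div_mul_of_mul_one_div_le {ρ m n : ℝ} (hρ : 0 < ρ) (hm : 0 < m) (hn : 0 < n)
    (h : ρ * (1 / m) ≤ 1 / n) : n ≤ 1 / ρ * m := by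
  rw [mul_one_div, div_le_div_iff₀ hm hn, one_mul] at h
  rw [one_div_mul_eq_div, le_div_iff₀ hρ, mul_comm]
  exact h

theorem stmt_7_general {V : Type*} [Fintype V] [DecidableEq V] (G : SimpleGraph V)
    (k : ℕ) (S : Fin k → Set V) (vstar : V)
    (F : Set G.Subgraph)
    (hF : F = {H : G.Subgraph | H.Connected ∧ vstar ∈ H.verts ∧
        ∀ i : Fin k, (H.verts ∩ S i).Nonempty})
    (ρ : ℝ) (hρ0 : 0 < ρ)
    (M : ℝ) (m : ℕ)
    (hM : IsGreatest ((fun H : G.Subgraph => Phi H (redVal vstar) (fun _ => 0)) '' F) M)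
    (hm : IsLeast ((fun H : G.Subgraph => H.verts.ncard + H.edgeSet.ncard) '' F) m)
    (H : G.Subgraph) (hH : H ∈ F)
    (happrox : Phi H (redVal vstar) (fun _ => 0) ≥ ρ * M) :
    ((H.verts.ncard + H.edgeSet.ncard : ℕ) : ℝ) ≤ (1 / ρ) * (m : ℝ) := by
  have hroot : ∀ H' ∈ F, vstar ∈ H'.verts := fun H' hH' => by
    rw [hF] at hH'
    exact hH'.2.1
  obtain ⟨H₀, hH₀, rfl⟩ := hm.1
  have hM₀ := hM.2 ⟨H₀, hH₀, rfl⟩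
  simp only [Phi_redVal_of_mem (hroot H₀ hH₀)] at hM₀
  rw [Phi_redVal_of_mem (hroot H hH)] at happrox
  have hsize : ∀ H' ∈ F, (0 : ℝ) < ((H'.verts.ncard + H'.edgeSet.ncard : ℕ) : ℝ) :=
    fun H' hH' => Nat.cast_pos.mpr
      (SimpleGraph.Subgraph.ncard_verts_add_ncard_edgeSet_pos (hroot H' hH'))
  exact le_one_div_mul_of_mul_one_div_le hρ0 (hsize H₀ hH₀) (hsize H hH)
    ((mul_le_mul_of_nonneg_left hM₀ hρ0.le).trans happrox)

theorem stmt_7 {V : Type*} [Fintype V] [DecidableEq V] (G : SimpleGraph V)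
    (k : ℕ) (S : Fin k → Set V) (vstar : V)
    (F : Set G.Subgraph)
    (hF : F = {H : G.Subgraph | H.Connected ∧ vstar ∈ H.verts ∧
        ∀ i : Fin k, (H.verts ∩ S i).Nonempty})
    (hne : F.Nonempty)
    (ρ : ℝ) (hρ0 : 0 < ρ) (hρ1 : ρ ≤ 1)
    (M : ℝ) (m : ℕ)
    (hM : IsGreatest ((fun H : G.Subgraph => Phi H (redVal vstar) (fun _ => 0)) '' F) M)
    (hm : IsLeast ((fun H : G.Subgraph => H.verts.ncard + H.edgeSet.ncard) '' F) m)
    (H : G.Subgraph) (hH : H ∈ F)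
    (happrox : Phi H (redVal vstar) (fun _ => 0) ≥ ρ * M) :
    ((H.verts.ncard + H.edgeSet.ncard : ℕ) : ℝ) ≤ (1 / ρ) * (m : ℝ) :=
  stmt_7_general G k S vstar F hF ρ hρ0 M m hM hm H hH happrox
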